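/- arXiv:1905.08127 — 2 statements merged into one kernel-verified Lean document; each statement's English description precedes it below -/
import Mathlib

section
/- Let V be a finite type with at least two elements, w : V → V → ℕ∞, d : ℕ, and let w^{≤d} be the capped graph on V. Then there exist u ≠ v with dist_w(u,v) ≥ d if and only if there exist u ≠ v with dist_{w^{≤d}}(u,v) = d. Equivalently, the diameter of the original graph is at least d exactly when some off-diagonal entry of the constant matrix with all off-diagonal entries d is a correct distance of the capped graph. -/
/-!
On distinct vertices the capped distance is `min (dist_w u v) d`: the direct edge of weight `d`
gives `≤ d`, capping can only shorten walks, and conversely capping each edge of a walk at `d`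
lowers its weight no further than capping the total weight at `d`. Hence the capped distance
equals `d` exactly when `dist_w u v ≥ d`.
-/

/-- Weight of a walk starting at `u` and visiting the vertices of `p` in order. -/
def walkWeight {V : Type*} (w : V → V → ℕ∞) : V → List V → ℕ∞
  | _, [] => 0
  | u, x :: xs => w u x + walkWeight w x xs

/-- Shortest-path distance: infimum of weights of walks from `u` to `v`. -/
noncomputable def gdist {V : Type*} (w : V → V → ℕ∞) (u v : V) : ℕ∞ :=
  ⨅ (p : List V) (_ : (u :: p).getLast (List.cons_ne_nil u p) = v), walkWeight w u p

/-- Eccentricity of a vertex. -/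
noncomputable def ecc {V : Type*} (w : V → V → ℕ∞) (v : V) : ℕ∞ :=
  ⨆ u, gdist w v u

/-- Radius. -/
noncomputable def rad {V : Type*} (w : V → V → ℕ∞) : ℕ∞ :=
  ⨅ v, ecc w v

/-- Diameter. -/
noncomputable def diam {V : Type*} (w : V → V → ℕ∞) : ℕ∞ :=
  ⨆ v, ecc w v

/-- Capped graph: add an edge of weight `d` between every ordered pair of distinct vertices. -/
noncomputable def capped {V : Type*} [DecidableEq V] (w : V → V → ℕ∞) (d : ℕ) : V → V → ℕ∞ :=
  fun u v => if u = v then w u v else min (w u v) (d : ℕ∞)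

theorem min_add_le_min_add_min {α : Type*} [AddCommMonoid α] [LinearOrder α]
    [CanonicallyOrderedAdd α] (a b c : α) : min (a + b) c ≤ min a c + min b c := by
  rcases le_total a c with hac | hca
  · rcases le_total b c with hbc | hcb
    · rw [min_eq_left hac, min_eq_left hbc]
      exact min_le_left _ _
    · rw [min_eq_right hcb]
      exact (min_le_right _ _).trans le_add_self
  · rw [min_eq_right hca]
    exact (min_le_right _ _).trans le_self_add

section Walks

variable {V : Type*}

theorem walkWeight_mono {w w' : V → V → ℕ∞} (h : ∀ u v, w' u v ≤ w u v) (u : V) (p : List V) :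
    walkWeight w' u p ≤ walkWeight w u p := by
  induction p generalizing u with
  | nil => exact le_rfl
  | cons x xs ih => exact add_le_add (h u x) (ih x)

theorem min_walkWeight_le_walkWeight_min (w : V → V → ℕ∞) (c : ℕ∞) (u : V) (p : List V) :
    min (walkWeight w u p) c ≤ walkWeight (fun a b => min (w a b) c) u p := by
  induction p generalizing u with
  | nil => simp [walkWeight]
  | cons x xs ih =>
    calc min (w u x + walkWeight w x xs) c
        ≤ min (w u x) c + min (walkWeight w x xs) c := min_add_le_min_add_min _ _ _
      _ ≤ min (w u x) c + walkWeight (fun a b => min (w a b) c) x xs := add_le_add le_rfl (ih x)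

theorem gdist_mono {w w' : V → V → ℕ∞} (h : ∀ u v, w' u v ≤ w u v) (u v : V) :
    gdist w' u v ≤ gdist w u v :=
  le_iInf₂ fun p hp => (iInf₂_le p hp).trans (walkWeight_mono h u p)

theorem gdist_le_weight (w : V → V → ℕ∞) (u v : V) : gdist w u v ≤ w u v :=
  (iInf₂_le (f := fun p (_ : (u :: p).getLast (List.cons_ne_nil u p) = v) => walkWeight w u p)
    [v] rfl).trans_eq (add_zero _)

theorem min_gdist_le_gdist_min (w : V → V → ℕ∞) (c : ℕ∞) (u v : V) :
    min (gdist w u v) c ≤ gdist (fun a b => min (w a b) c) u v :=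
  le_iInf₂ fun p hp =>
    (min_le_min_right c (iInf₂_le p hp)).trans (min_walkWeight_le_walkWeight_min w c u p)

end Walks

section Capped

variable {V : Type*} [DecidableEq V] (w : V → V → ℕ∞) (d : ℕ)

theorem capped_le (u v : V) : capped w d u v ≤ w u v := by
  unfold capped
  split_ifs
  exacts [le_rfl, min_le_left _ _]

theorem min_le_capped (u v : V) : min (w u v) d ≤ capped w d u v := by
  unfold capped
  split_ifs
  exacts [min_le_left _ _, le_rfl]

theorem gdist_capped_of_ne {u v : V} (huv : u ≠ v) :
    gdist (capped w d) u v = min (gdist w u v) d := by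
  refine le_antisymm (le_min (gdist_mono (capped_le w d) u v) ?_) ?_
  · calc gdist (capped w d) u v ≤ capped w d u v := gdist_le_weight _ u v
      _ ≤ d := by simp [capped, huv]
  · exact (min_gdist_le_gdist_min w d u v).trans (gdist_mono (min_le_capped w d) u v)

end Capped

theorem stmt11_general {V : Type*} [DecidableEq V]
    (w : V → V → ℕ∞) (d : ℕ) :
    (∃ u v : V, u ≠ v ∧ (d : ℕ∞) ≤ gdist w u v) ↔
      (∃ u v : V, u ≠ v ∧ gdist (capped w d) u v = (d : ℕ∞)) := by
  refine exists₂_congr fun u v => and_congr_right fun huv => ?_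
  rw [gdist_capped_of_ne w d huv, min_eq_right_iff]

theorem stmt11 {V : Type*} [Fintype V] [DecidableEq V] [Nontrivial V]
    (w : V → V → ℕ∞) (d : ℕ) :
    (∃ u v : V, u ≠ v ∧ (d : ℕ∞) ≤ gdist w u v) ↔
      (∃ u v : V, u ≠ v ∧ gdist (capped w d) u v = (d : ℕ∞)) :=
  stmt11_general w d
end

section
/- Let V be a finite type, M ≥ 1 an integer, w : V → V → ℤ with |w u v| ≤ M for all u ≠ v, H = 10M, and let w₆ be the six-layer graph on V × Fin 6. Then ⨆_{p,q : V} dist_{w₆}((p,0),(q,5)) ≥ 5H if and only if there exists a vertex v : V that lies in no negative triangle, i.e., for all u, z with v, u, z pairwise distinct, w v u + w u z + w z v ≥ 0. -/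
/-- Six-layer graph on `V × Fin 6` (parts X, A, B, C, D, Y), with `H = 10 * M`:
edges `(v,0) → (v,1)` and `(v,4) → (v,5)` of weight `H`; edges `(u,i) → (v,i+1)` of
weight `H + w u v` for `i ∈ {1,2,3}` and `u ≠ v`; edges `(u,1) → (v,4)` of weight `0`
for `u ≠ v`; all other weights `⊤`. -/
def layer6 {V : Type*} [DecidableEq V] (w : V → V → ℤ) (M : ℤ) :
    V × Fin 6 → V × Fin 6 → ℕ∞ := fun p q =>
  if p.1 = q.1 ∧ ((p.2 = 0 ∧ q.2 = 1) ∨ (p.2 = 4 ∧ q.2 = 5)) then ((10 * M).toNat : ℕ∞)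
  else if p.1 ≠ q.1 ∧ 1 ≤ (p.2 : ℕ) ∧ (p.2 : ℕ) ≤ 3 ∧ (q.2 : ℕ) = (p.2 : ℕ) + 1 then
    ((10 * M + w p.1 q.1).toNat : ℕ∞)
  else if p.1 ≠ q.1 ∧ p.2 = 1 ∧ q.2 = 4 then 0
  else ⊤

section Distance

variable {α : Type*} (w : α → α → ℕ∞)

theorem gdist_le_walkWeight {u v : α} (p : List α)
    (hp : (u :: p).getLast (List.cons_ne_nil u p) = v) : gdist w u v ≤ walkWeight w u p :=
  iInf₂_le p hp

theorem iInf_add_gdist_le_gdist {u v : α} (huv : u ≠ v) :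
    ⨅ x, w u x + gdist w x v ≤ gdist w u v := by
  refine le_iInf₂ fun p hp => ?_
  cases p with
  | nil => exact absurd hp huv
  | cons x p =>
    rw [List.getLast_cons (List.cons_ne_nil x p)] at hp
    exact iInf_le_of_le x (add_le_add_right (gdist_le_walkWeight w p hp) _)

theorem gdist_eq_top_of_forall_eq_top {u v : α} (huv : u ≠ v) (hu : ∀ x, w u x = ⊤) :
    gdist w u v = ⊤ :=
  top_unique <| (iInf_add_gdist_le_gdist w huv).trans' (by simp [hu])

end Distance

theorem toNat_le_toNat_add_toNat {a b c : ℤ} (h : a ≤ b + c) :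
    (a.toNat : ℕ∞) ≤ b.toNat + c.toNat := by
  norm_cast
  omega

section SixLayer

variable {V : Type*} [DecidableEq V] (w : V → V → ℤ) (M : ℤ)

theorem layer6_from_zero (v b : V) (j : Fin 6) :
    layer6 w M (v, 0) (b, j) = if v = b ∧ j = 1 then ((10 * M).toNat : ℕ∞) else ⊤ := by
  fin_cases j <;> simp [layer6]

theorem layer6_from_one (v b : V) (j : Fin 6) :
    layer6 w M (v, 1) (b, j) =
      if v ≠ b ∧ j = 2 then ((10 * M + w v b).toNat : ℕ∞)
      else if v ≠ b ∧ j = 4 then 0 else ⊤ := by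
  fin_cases j <;> simp [layer6]

theorem layer6_from_two (v b : V) (j : Fin 6) :
    layer6 w M (v, 2) (b, j) =
      if v ≠ b ∧ j = 3 then ((10 * M + w v b).toNat : ℕ∞) else ⊤ := by
  fin_cases j <;> simp [layer6]

theorem layer6_from_three (v b : V) (j : Fin 6) :
    layer6 w M (v, 3) (b, j) =
      if v ≠ b ∧ j = 4 then ((10 * M + w v b).toNat : ℕ∞) else ⊤ := by
  fin_cases j <;> simp [layer6]

theorem layer6_from_four (v b : V) (j : Fin 6) :
    layer6 w M (v, 4) (b, j) = if v = b ∧ j = 5 then ((10 * M).toNat : ℕ∞) else ⊤ := by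
  fin_cases j <;> simp [layer6]

theorem layer6_from_five (v : V) (x : V × Fin 6) : layer6 w M (v, 5) x = ⊤ := by
  obtain ⟨b, j⟩ := x
  fin_cases j <;> simp [layer6]

theorem gdist_layer6_five_eq_top {x v : V} (h : x ≠ v) :
    gdist (layer6 w M) (x, 5) (v, 5) = ⊤ :=
  gdist_eq_top_of_forall_eq_top _ (by simpa using h) (layer6_from_five w M x)

theorem le_gdist_layer6_four (d v : V) :
    (if d = v then ((10 * M).toNat : ℕ∞) else ⊤) ≤ gdist (layer6 w M) (d, 4) (v, 5) := by
  refine (iInf_add_gdist_le_gdist _ (by simp)).trans' (le_iInf fun x => ?_)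
  obtain ⟨e, j⟩ := x
  rw [layer6_from_four]
  by_cases hx : d = e ∧ j = 5
  · obtain ⟨rfl, rfl⟩ := hx
    rw [if_pos (And.intro rfl rfl)]
    rcases eq_or_ne d v with rfl | hdv
    · simp
    · simp [gdist_layer6_five_eq_top w M hdv]
  · rw [if_neg hx, top_add]
    exact le_top

theorem le_gdist_layer6_three (c v : V) :
    (if c = v then ⊤ else ((20 * M + w c v).toNat : ℕ∞)) ≤
      gdist (layer6 w M) (c, 3) (v, 5) := by
  refine (iInf_add_gdist_le_gdist _ (by simp)).trans' (le_iInf fun x => ?_)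
  obtain ⟨d, j⟩ := x
  rw [layer6_from_three]
  by_cases hx : c ≠ d ∧ j = 4
  · obtain ⟨hcd, rfl⟩ := hx
    have h4 := le_gdist_layer6_four w M d v
    rcases eq_or_ne d v with rfl | hdv
    · rw [if_pos rfl] at h4
      rw [if_pos (And.intro hcd rfl), if_neg hcd]
      exact (toNat_le_toNat_add_toNat (by omega)).trans (add_le_add_right h4 _)
    · rw [if_neg hdv, top_le_iff] at h4
      simp [h4]
  · rw [if_neg hx, top_add]
    exact le_top

theorem le_gdist_layer6_two {v b : V} (hvb : v ≠ b)
    (hv : ∀ c, b ≠ c → c ≠ v → 0 ≤ w v b + w b c + w c v) :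
    ((30 * M - w v b).toNat : ℕ∞) ≤ gdist (layer6 w M) (b, 2) (v, 5) := by
  refine (iInf_add_gdist_le_gdist _ (by simp)).trans' (le_iInf fun x => ?_)
  obtain ⟨c, j⟩ := x
  rw [layer6_from_two]
  by_cases hx : b ≠ c ∧ j = 3
  · obtain ⟨hbc, rfl⟩ := hx
    have h3 := le_gdist_layer6_three w M c v
    rcases eq_or_ne c v with rfl | hcv
    · rw [if_pos rfl, top_le_iff] at h3
      simp [h3]
    · rw [if_neg hcv] at h3
      rw [if_pos (And.intro hbc rfl)]
      have := hv c hbc hcv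
      exact (toNat_le_toNat_add_toNat (by omega)).trans (add_le_add_right h3 _)
  · rw [if_neg hx, top_add]
    exact le_top

theorem le_gdist_layer6_one {v : V}
    (hv : ∀ u z, v ≠ u → v ≠ z → u ≠ z → 0 ≤ w v u + w u z + w z v) :
    ((40 * M).toNat : ℕ∞) ≤ gdist (layer6 w M) (v, 1) (v, 5) := by
  refine (iInf_add_gdist_le_gdist _ (by simp)).trans' (le_iInf fun x => ?_)
  obtain ⟨b, j⟩ := x
  rw [layer6_from_one]
  by_cases h2 : v ≠ b ∧ j = 2
  · obtain ⟨hvb, rfl⟩ := h2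
    have h2 := le_gdist_layer6_two w M hvb fun c hbc hcv => hv b c hvb hcv.symm hbc
    rw [if_pos (And.intro hvb rfl)]
    exact (toNat_le_toNat_add_toNat (by omega)).trans (add_le_add_right h2 _)
  by_cases h4 : v ≠ b ∧ j = 4
  · obtain ⟨hvb, rfl⟩ := h4
    have h4 := le_gdist_layer6_four w M b v
    rw [if_neg hvb.symm, top_le_iff] at h4
    simp [h4]
  · rw [if_neg h2, if_neg h4, top_add]
    exact le_top

theorem le_gdist_layer6_zero {v : V}
    (hv : ∀ u z, v ≠ u → v ≠ z → u ≠ z → 0 ≤ w v u + w u z + w z v) :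
    ((50 * M).toNat : ℕ∞) ≤ gdist (layer6 w M) (v, 0) (v, 5) := by
  refine (iInf_add_gdist_le_gdist _ (by simp)).trans' (le_iInf fun x => ?_)
  obtain ⟨b, j⟩ := x
  rw [layer6_from_zero]
  by_cases hx : v = b ∧ j = 1
  · obtain ⟨rfl, rfl⟩ := hx
    rw [if_pos (And.intro rfl rfl)]
    exact (toNat_le_toNat_add_toNat (by omega)).trans
      (add_le_add_right (le_gdist_layer6_one w M hv) _)
  · rw [if_neg hx, top_add]
    exact le_top

theorem gdist_layer6_le_of_ne {p q : V} (hpq : p ≠ q) :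
    gdist (layer6 w M) (p, 0) (q, 5) ≤ ((20 * M).toNat : ℕ∞) := by
  refine (gdist_le_walkWeight _ [(p, 1), (q, 4), (q, 5)] rfl).trans ?_
  simp only [walkWeight, Fin.isValue, layer6_from_zero, and_self, ↓reduceIte, layer6_from_one,
    ne_eq, hpq, not_false_eq_true, Fin.reduceEq, and_false, layer6_from_four, add_zero, zero_add]
  norm_cast
  omega

theorem gdist_layer6_le_of_triangle (hbound : ∀ u v : V, u ≠ v → |w u v| ≤ M) {p u z : V}
    (hpu : p ≠ u) (huz : u ≠ z) (hzp : z ≠ p) :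
    gdist (layer6 w M) (p, 0) (p, 5) ≤ ((50 * M + (w p u + w u z + w z p)).toNat : ℕ∞) := by
  refine (gdist_le_walkWeight _ [(p, 1), (u, 2), (z, 3), (p, 4), (p, 5)] rfl).trans ?_
  simp only [walkWeight, Fin.isValue, layer6_from_zero, and_self, ↓reduceIte, layer6_from_one,
    ne_eq, hpu, not_false_eq_true, layer6_from_two, huz, layer6_from_three, hzp, layer6_from_four,
    add_zero]
  have := abs_le.mp (hbound p u hpu)
  have := abs_le.mp (hbound u z huz)
  have := abs_le.mp (hbound z p hzp)
  norm_cast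
  omega

end SixLayer

theorem stmt14_general {V : Type*} [DecidableEq V] (M : ℤ) (hM : 1 ≤ M)
    (w : V → V → ℤ) (hbound : ∀ u v : V, u ≠ v → |w u v| ≤ M) :
    ((50 * M).toNat : ℕ∞) ≤ (⨆ (p : V) (q : V), gdist (layer6 w M) (p, 0) (q, 5)) ↔
      ∃ v : V, ∀ u z : V, v ≠ u → v ≠ z → u ≠ z → 0 ≤ w v u + w u z + w z v := by
  constructor
  · intro h
    by_contra! hneg
    have hsup : (⨆ (p : V) (q : V), gdist (layer6 w M) (p, 0) (q, 5)) ≤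
        ((50 * M - 1).toNat : ℕ∞) := by
      refine iSup₂_le fun p q => ?_
      rcases eq_or_ne p q with rfl | hpq
      · obtain ⟨u, z, hpu, hpz, huz, hpuz⟩ := hneg p
        exact (gdist_layer6_le_of_triangle w M hbound hpu huz hpz.symm).trans (by norm_cast; omega)
      · exact (gdist_layer6_le_of_ne w M hpq).trans (by norm_cast; omega)
    have := h.trans hsup
    norm_cast at this
    omega
  · rintro ⟨v, hv⟩
    exact (le_gdist_layer6_zero w M hv).trans (le_iSup₂_of_le v v le_rfl)

theorem stmt14 {V : Type*} [Fintype V] [DecidableEq V] (M : ℤ) (hM : 1 ≤ M)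
    (w : V → V → ℤ) (hbound : ∀ u v : V, u ≠ v → |w u v| ≤ M) :
    ((50 * M).toNat : ℕ∞) ≤ (⨆ (p : V) (q : V), gdist (layer6 w M) (p, 0) (q, 5)) ↔
      ∃ v : V, ∀ u z : V, v ≠ u → v ≠ z → u ≠ z → 0 ≤ w v u + w u z + w z v :=
  stmt14_general M hM w hbound
end
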